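/- arXiv:2209.03165 — 3 statements merged into one kernel-verified Lean document; each statement's English description precedes it below -/
import Mathlib

section
/- Let k ≥ 2 and let λ₁, …, λ_k be the distinct complex roots of P(x) = x^k - x^{k-1} - ⋯ - x - 1. Then for each m with 1 ≤ m ≤ k, the identity ∏_{j ≠ m} (λ_m - λ_j) = ((k+1)λ_m - 2k) · λ_m^{k-1} / (λ_m - 1) holds (note λ_m ≠ 1 since P(1) = 1 - k ≠ 0). -/
open Polynomial Finset

theorem prod_diff_identity (k : ℕ) (hk : 2 ≤ k) (lam : Fin k → ℂ)
    (hroot : ∀ m, lam m ^ k = ∑ i ∈ Finset.range k, lam m ^ i)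
    (hinj : Function.Injective lam) :
    ∀ m, ∏ j ∈ Finset.univ.erase m, (lam m - lam j)
        = ((k + 1 : ℂ) * lam m - 2 * k) * lam m ^ (k - 1) / (lam m - 1) := by
  classical
  intro m
  have hk0 : 0 < k := by omega
  set Q : ℂ[X] := X ^ k - ∑ i ∈ Finset.range k, X ^ i with hQdef
  set R : ℂ[X] := ∏ j : Fin k, (X - C (lam j)) with hRdef
  have hSdeg : (∑ i ∈ Finset.range k, (X : ℂ[X]) ^ i).degree < (k : ℕ) := by
    apply lt_of_le_of_lt (Polynomial.degree_sum_le _ _)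
    rw [Finset.sup_lt_iff (by exact_mod_cast WithBot.bot_lt_coe k)]
    intro i hi
    rw [Polynomial.degree_X_pow]
    exact_mod_cast Finset.mem_range.mp hi
  have hXdeg : ((X : ℂ[X]) ^ k).degree = (k : ℕ) := Polynomial.degree_X_pow k
  have hQdeg : Q.degree = (k : ℕ) := by
    rw [hQdef, Polynomial.degree_sub_eq_left_of_degree_lt (by rw [hXdeg]; exact hSdeg), hXdeg]
  have hQlc : Q.leadingCoeff = 1 := by
    rw [hQdef, Polynomial.leadingCoeff_sub_of_degree_lt (by rw [hXdeg]; exact hSdeg)]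
    exact Polynomial.monic_X_pow k
  have hRmonic : R.Monic := monic_prod_of_monic _ _ fun j _ => monic_X_sub_C _
  have hRdeg : R.degree = (k : ℕ) := by
    rw [hRdef, Polynomial.degree_prod]
    simp [Polynomial.degree_X_sub_C]
  have hQne : Q ≠ 0 := fun h => by simp [h] at hQdeg
  have hQevalroot : ∀ j, Q.eval (lam j) = 0 := by
    intro j
    simp only [hQdef, Polynomial.eval_sub, Polynomial.eval_pow, Polynomial.eval_X,
      Polynomial.eval_finset_sum]
    rw [sub_eq_zero, hroot j]
  have hQR : Q = R := by
    by_contra hne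
    have hD : Q - R ≠ 0 := sub_ne_zero.mpr hne
    have hdlt : (Q - R).degree < (k : ℕ) := by
      calc (Q - R).degree < Q.degree :=
        Polynomial.degree_sub_lt (hQdeg.trans hRdeg.symm) hQne (by rw [hQlc, hRmonic.leadingCoeff])
      _ = (k : ℕ) := hQdeg
    have hnd : (Q - R).natDegree < k := by
      rwa [Polynomial.natDegree_lt_iff_degree_lt hD]
    have : Q - R = 0 := by
      apply Polynomial.eq_zero_of_natDegree_lt_card_of_eval_eq_zero _ hinj
      · intro j
        have hR : R.eval (lam j) = 0 := by
          rw [hRdef, Polynomial.eval_prod]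
          exact Finset.prod_eq_zero (Finset.mem_univ j) (by simp)
        simp [hQevalroot j, hR]
      · simpa using hnd
    exact hD this
  -- value of derivative at lam m equals the product
  have hprod : Polynomial.eval (lam m) (Polynomial.derivative Q)
      = ∏ j ∈ Finset.univ.erase m, (lam m - lam j) := by
    rw [hQR, hRdef]
    have hR' : (∏ j : Fin k, ((X : ℂ[X]) - C (lam j)))
        = (Multiset.map (fun a => (X : ℂ[X]) - C a) (Finset.univ.val.map lam)).prod := by
      rw [Multiset.map_map]
      rfl
    rw [hR', Polynomial.eval_multiset_prod_X_sub_C_derivative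
      (Multiset.mem_map_of_mem lam (Finset.mem_val.mpr (Finset.mem_univ m)))]
    rw [← Multiset.map_erase lam hinj m Finset.univ.val, Multiset.map_map]
    rw [Finset.prod, Finset.erase_val]
    rfl
  -- compute Q' (lam m) * (lam m - 1)
  have hF : Q * (X - 1) = X ^ (k + 1) - 2 * X ^ k + 1 := by
    have hg := geom_sum_mul (X : ℂ[X]) k
    rw [hQdef, sub_mul, hg]
    ring
  have hder := congrArg Polynomial.derivative hF
  rw [Polynomial.derivative_mul] at hder
  have hdereval := congrArg (Polynomial.eval (lam m)) hder
  have hlam1 : lam m - 1 ≠ 0 := by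
    refine sub_ne_zero.mpr fun h1 => ?_
    have hth := hroot m
    rw [h1] at hth
    simp at hth
    have hck : (k : ℂ) = 1 := by first | exact hth | exact hth.symm
    have : k = 1 := by exact_mod_cast hck
    omega
  have hQ'val : Polynomial.eval (lam m) (Polynomial.derivative Q) * (lam m - 1)
      = ((k + 1 : ℂ) * lam m - 2 * k) * lam m ^ (k - 1) := by
    have hk1 : k - 1 + 1 = k := by omega
    simp only [Polynomial.eval_add, Polynomial.eval_mul, Polynomial.eval_sub,
      Polynomial.eval_one, Polynomial.eval_X, hQevalroot m, mul_zero, zero_mul,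
      Polynomial.derivative_sub, Polynomial.derivative_add, Polynomial.derivative_one,
      Polynomial.derivative_mul, Polynomial.derivative_pow, Polynomial.derivative_X,
      Polynomial.derivative_ofNat, Polynomial.eval_pow, Polynomial.eval_natCast,
      Polynomial.eval_ofNat, Polynomial.eval_C, Polynomial.eval_zero, add_zero, zero_add,
      mul_one, Nat.add_sub_cancel] at hdereval
    have hpow : lam m ^ k = lam m * lam m ^ (k - 1) := by
      conv_lhs => rw [← hk1]
      ring
    push_cast at hdereval
    rw [hpow] at hdereval
    linear_combination hdereval
  rw [eq_div_iff hlam1, ← hprod, hQ'val]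
end

section
/- Let k ≥ 2 and let λ₁, …, λ_k be the distinct complex roots of x^k - x^{k-1} - ⋯ - x - 1. Dresden's formula ∑_{m=1}^{k} ((λ_m - 1)/(2 + (k+1)(λ_m - 2))) λ_m^{n-1} equals ∑_{m=1}^{k} λ_m^{n+k-2} / ∏_{j ≠ m}(λ_m - λ_j) for all n ≥ 1. -/
open Polynomial Finset

theorem dresden_eq_binet (k : ℕ) (hk : 2 ≤ k) (lam : Fin k → ℂ)
    (hroot : ∀ m, lam m ^ k = ∑ i ∈ Finset.range k, lam m ^ i)
    (hinj : Function.Injective lam) :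
    ∀ n : ℕ, 1 ≤ n →
      ∑ m, (lam m - 1) / (2 + (k + 1 : ℂ) * (lam m - 2)) * lam m ^ (n - 1)
        = ∑ m, lam m ^ (n + k - 2) / ∏ j ∈ Finset.univ.erase m, (lam m - lam j) := by
  -- the polynomial Q = X^k - ∑ X^i
  set Q : ℂ[X] := X ^ k - ∑ i ∈ Finset.range k, X ^ i with hQdef
  have hdegsum : (∑ i ∈ Finset.range k, (X : ℂ[X]) ^ i).degree < (k : ℕ) := by
    apply lt_of_le_of_lt (Polynomial.degree_sum_le _ _)
    rw [Finset.sup_lt_iff (by exact_mod_cast WithBot.bot_lt_coe k)]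
    intro i hi
    rw [Polynomial.degree_X_pow]
    exact_mod_cast Finset.mem_range.mp hi
  have hmon : Q.Monic := Polynomial.monic_X_pow_sub hdegsum
  have hQ0 : Q ≠ 0 := hmon.ne_zero
  have hdegQ : Q.degree = k := by
    rw [hQdef, Polynomial.degree_sub_eq_left_of_degree_lt (by
      rwa [Polynomial.degree_X_pow]), Polynomial.degree_X_pow]
  have hndegQ : Q.natDegree = k := Polynomial.natDegree_eq_of_degree_eq_some hdegQ
  have hevalQ : ∀ z : ℂ, Polynomial.eval z Q = z ^ k - ∑ i ∈ Finset.range k, z ^ i := by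
    intro z
    simp [hQdef, Polynomial.eval_finset_sum]
  have hQroot : ∀ m, Polynomial.eval (lam m) Q = 0 := by
    intro m
    rw [hevalQ, hroot m, sub_self]
  -- Q factors as ∏ (X - lam j)
  have hsplits : Q.Splits := IsAlgClosed.splits Q
  have hcard : Q.roots.card = k := by
    rw [← hndegQ]
    exact (Polynomial.splits_iff_card_roots.mp hsplits)
  have hM : (Finset.univ.val.map lam : Multiset ℂ) = Q.roots := by
    apply Multiset.eq_of_le_of_card_le
    · rw [Multiset.le_iff_subset (Multiset.Nodup.map hinj Finset.univ.nodup)]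
      intro a ha
      obtain ⟨m, _, rfl⟩ := Multiset.mem_map.mp ha
      exact (Polynomial.mem_roots hQ0).mpr (hQroot m)
    · rw [hcard, Multiset.card_map]
      simp
  have hfact : Q = ∏ j, (X - C (lam j)) := by
    rw [hsplits.eq_prod_roots_of_monic hmon, ← hM]
    rw [Multiset.map_map]
    rfl
  -- evaluation of the derivative at lam m is the product
  have hD : ∀ m, Polynomial.eval (lam m) (Polynomial.derivative Q)
      = ∏ j ∈ Finset.univ.erase m, (lam m - lam j) := by
    intro m
    have hmem : lam m ∈ Q.roots := (Polynomial.mem_roots hQ0).mpr (hQroot m)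
    conv_lhs => rw [hsplits.eq_prod_roots_of_monic hmon]
    rw [Polynomial.eval_multiset_prod_X_sub_C_derivative hmem]
    rw [← hM, ← Multiset.map_erase lam hinj, ← Finset.erase_val, Multiset.map_map]
    rfl
  -- the key polynomial identity
  have hQ1 : (X - 1) * Q = X ^ (k + 1) - 2 * X ^ k + 1 := by
    have hg := geom_sum_mul (X : ℂ[X]) k
    rw [hQdef]
    linear_combination -hg
  -- differentiate and evaluate
  have hkey : ∀ m, (lam m - 1) * (∏ j ∈ Finset.univ.erase m, (lam m - lam j))
      = lam m ^ (k - 1) * (((k : ℂ) + 1) * lam m - 2 * k) := by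
    intro m
    have hder := congrArg Polynomial.derivative hQ1
    rw [Polynomial.derivative_mul] at hder
    have hev := congrArg (Polynomial.eval (lam m)) hder
    simp only [Polynomial.derivative_sub, Polynomial.derivative_add, Polynomial.derivative_one,
      Polynomial.derivative_X, Polynomial.derivative_X_pow, Polynomial.derivative_mul,
      Polynomial.derivative_C, Polynomial.eval_add, Polynomial.eval_sub, Polynomial.eval_mul,
      Polynomial.eval_one, Polynomial.eval_X, Polynomial.eval_pow, Polynomial.eval_natCast,
      Polynomial.eval_C, Polynomial.eval_ofNat, Polynomial.derivative_ofNat,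
      Polynomial.eval_zero, hQroot m, hD m] at hev
    obtain ⟨K, rfl⟩ : ∃ K, k = K + 2 := ⟨k - 2, by omega⟩
    push_cast at hev ⊢
    linear_combination hev
  -- finish
  intro n hn
  obtain ⟨N, rfl⟩ : ∃ N, n = N + 1 := ⟨n - 1, by omega⟩
  obtain ⟨K, rfl⟩ : ∃ K, k = K + 2 := ⟨k - 2, by omega⟩
  apply Finset.sum_congr rfl
  intro m _
  have hD0 : (∏ j ∈ Finset.univ.erase m, (lam m - lam j)) ≠ 0 := by
    rw [Finset.prod_ne_zero_iff]
    intro j hj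
    exact sub_ne_zero.mpr fun h => (Finset.mem_erase.mp hj).1 (hinj h.symm)
  have hkeym := hkey m
  have hc2 : (2 : ℂ) + ((K + 2 : ℕ) + 1) * (lam m - 2) = ((K + 2 : ℕ) + 1 : ℂ) * lam m - 2 * (K + 2 : ℕ) := by
    push_cast; ring
  have hc : ((K + 2 : ℕ) + 1 : ℂ) * lam m - 2 * (K + 2 : ℕ) ≠ 0 := by
    intro h0
    rw [h0, mul_zero] at hkeym
    have hl1 : lam m = 1 := by
      rcases mul_eq_zero.mp hkeym with h | h
      · linear_combination h
      · exact absurd h hD0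
    rw [hl1] at h0
    have h1 : ((K : ℂ) + 1) = 0 := by push_cast at h0; linear_combination -h0
    have h2 : (K + 1 : ℕ) = (0 : ℕ) := by exact_mod_cast h1
    omega
  rw [hc2]
  have hexp1 : N + 1 - 1 = N := rfl
  have hexp2 : N + 1 + (K + 2) - 2 = N + (K + 1) := by omega
  rw [hexp1, hexp2]
  rw [div_mul_eq_mul_div, div_eq_div_iff hc hD0]
  have : lam m ^ (N + (K + 1)) = lam m ^ N * lam m ^ (K + 1) := pow_add _ _ _
  rw [this]
  simp only [show K + 2 - 1 = K + 1 from rfl] at hkeym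
  linear_combination lam m ^ N * hkeym
end

section
/- Let k ≥ 2, let λ₁, …, λ_k be the distinct complex roots of x^k - x^{k-1} - ⋯ - x - 1, and let (G_n) satisfy G_i = t_i for 0 ≤ i ≤ k-1 and G_n = ∑_{i=1}^{k} G_{n-i} for n ≥ k. Then for all n ≥ 0, G_n = ∑_{m=1}^{k} [ (∑_{p=1}^{k} (λ_m^{k-p} - ∑_{i=1}^{k-p} λ_m^{(k-p)-i}) t_{p-1}) / ∏_{j ≠ m}(λ_m - λ_j) ] · λ_mⁿ. -/
open Polynomial Finset

lemma aux_interp {k : ℕ} (lam : Fin k → ℂ) (hinj : Function.Injective lam)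
    (r : ℕ) (hr : r < k) :
    ∑ m, lam m ^ r / ∏ j ∈ Finset.univ.erase m, (lam m - lam j)
      = if r = k - 1 then 1 else 0 := by
  classical
  have hvs : Set.InjOn lam ↑(Finset.univ : Finset (Fin k)) := hinj.injOn
  have hcard : (Finset.univ : Finset (Fin k)).card = k :=
    Finset.card_univ.trans (Fintype.card_fin k)
  have hX : (X ^ r : ℂ[X]) = Lagrange.interpolate Finset.univ lam
      (fun i => (X ^ r : ℂ[X]).eval (lam i)) :=
    Lagrange.eq_interpolate hvs (by rw [hcard, degree_X_pow]; exact_mod_cast hr)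
  have hb : ∀ m : Fin k, (Lagrange.basis Finset.univ lam m).coeff (k-1)
      = (∏ j ∈ Finset.univ.erase m, (lam m - lam j))⁻¹ := by
    intro m
    have h1 : Lagrange.basis Finset.univ lam m
        = Polynomial.C (Lagrange.nodalWeight Finset.univ lam m)
          * Lagrange.nodal (Finset.univ.erase m) lam := by
      rw [Lagrange.basis_eq_prod_sub_inv_mul_nodal_div (Finset.mem_univ m),
        Lagrange.nodal_erase_eq_nodal_div (Finset.mem_univ m)]
    have h2 : (Lagrange.nodal (Finset.univ.erase m) lam).coeff (k-1) = 1 := by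
      have hmon := Lagrange.nodal_monic (s := Finset.univ.erase m) (v := lam)
      have hdeg : (Lagrange.nodal (Finset.univ.erase m) lam).natDegree = k - 1 := by
        have hd := Lagrange.degree_nodal (s := Finset.univ.erase m) (v := lam) (R := ℂ)
        rw [Finset.card_erase_of_mem (Finset.mem_univ m), hcard] at hd
        exact natDegree_eq_of_degree_eq_some hd
      rw [← hdeg]; exact hmon.coeff_natDegree
    rw [h1, coeff_C_mul, h2, mul_one, Lagrange.nodalWeight, ← Finset.prod_inv_distrib]
  have hco := congrArg (fun p : ℂ[X] => p.coeff (k-1)) hX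
  simp only [Lagrange.interpolate_apply, Polynomial.finset_sum_coeff, coeff_C_mul,
    coeff_X_pow, eval_pow, eval_X] at hco
  rw [Finset.sum_congr rfl (fun m _ => by rw [hb m])] at hco
  simp only [div_eq_mul_inv]
  rw [← hco]
  by_cases h : r = k - 1 <;> simp [h, eq_comm]
theorem k_fib_like_binet (k : ℕ) (hk : 2 ≤ k) (lam : Fin k → ℂ)
    (hroot : ∀ m, lam m ^ k = ∑ i ∈ Finset.range k, lam m ^ i)
    (hinj : Function.Injective lam)
    (t : ℕ → ℂ) (G : ℕ → ℂ)
    (hGinit : ∀ i, i < k → G i = t i)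
    (hGrec : ∀ n, G (n + k) = ∑ i ∈ Finset.range k, G (n + i)) :
    ∀ n, G n
      = ∑ m, (∑ p ∈ Finset.range k,
          (lam m ^ (k - 1 - p) - ∑ i ∈ Finset.range (k - 1 - p), lam m ^ i) * t p)
        / (∏ j ∈ Finset.univ.erase m, (lam m - lam j)) * lam m ^ n := by
  classical
  set D : Fin k → ℂ := fun m => ∏ j ∈ Finset.univ.erase m, (lam m - lam j) with hD
  set u : ℕ → ℂ := fun r => ∑ m, lam m ^ r / D m with hu
  have hiu : ∀ r, r < k → u r = if r = k - 1 then 1 else 0 := fun r hr =>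
    aux_interp lam hinj r hr
  have ulow : ∀ r, r < k - 1 → u r = 0 := by
    intro r hr; rw [hiu r (by omega), if_neg (by omega)]
  have utop : u (k - 1) = 1 := by
    rw [hiu (k - 1) (by omega), if_pos rfl]
  have urec : ∀ n, u (n + k) = ∑ i ∈ Finset.range k, u (n + i) := by
    intro n
    simp only [hu]
    rw [Finset.sum_comm]
    refine Finset.sum_congr rfl fun m _ => ?_
    rw [← Finset.sum_div]
    congr 1
    rw [pow_add, hroot m, Finset.mul_sum]
    exact Finset.sum_congr rfl fun i _ => (pow_add _ _ _).symm
  have hdelta : ∀ p n, p < k → n < k →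
      (u ((k - 1 - p) + n) - ∑ i ∈ Finset.range (k - 1 - p), u (i + n))
        = if p = n then 1 else 0 := by
    intro p n hp hn
    rcases lt_trichotomy n p with h | h | h
    · rw [if_neg (by omega), ulow _ (by omega),
        Finset.sum_eq_zero fun i hi => ulow _ (by
          simp only [Finset.mem_range] at hi; omega), sub_zero]
    · subst h
      rw [if_pos rfl, show (k - 1 - n) + n = k - 1 by omega, utop,
        Finset.sum_eq_zero fun i hi => ulow _ (by
          simp only [Finset.mem_range] at hi; omega), sub_zero]
    · rw [if_neg (by omega)]
      have e1 : (k - 1 - p) + n = (n - p - 1) + k := by omega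
      rw [e1, urec]
      have e2 : ∑ i ∈ Finset.range k, u ((n - p - 1) + i)
          = (∑ i ∈ Finset.range (p + 1), u ((n - p - 1) + i))
            + ∑ i ∈ Finset.range (k - 1 - p), u (i + n) := by
        have e3 := Finset.sum_range_add (fun i => u ((n - p - 1) + i)) (p + 1) (k - 1 - p)
        rw [show (p + 1) + (k - 1 - p) = k by omega] at e3
        rw [e3]
        congr 1
        exact Finset.sum_congr rfl fun i _ => by congr 1; omega
      rw [e2, add_sub_cancel_right]
      exact Finset.sum_eq_zero fun i hi => ulow _ (by
        simp only [Finset.mem_range] at hi; omega)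
  set H : ℕ → ℂ := fun n => ∑ m, (∑ p ∈ Finset.range k,
      (lam m ^ (k - 1 - p) - ∑ i ∈ Finset.range (k - 1 - p), lam m ^ i) * t p)
        / D m * lam m ^ n with hH
  have hinit : ∀ n, n < k → H n = t n := by
    intro n hn
    have step1 : H n = ∑ p ∈ Finset.range k, (∑ m,
        (lam m ^ (k - 1 - p) - ∑ i ∈ Finset.range (k - 1 - p), lam m ^ i)
          * lam m ^ n / D m) * t p := by
      simp only [hH]
      have hm : ∀ m : Fin k, (∑ p ∈ Finset.range k,
          (lam m ^ (k - 1 - p) - ∑ i ∈ Finset.range (k - 1 - p), lam m ^ i) * t p)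
            / D m * lam m ^ n
          = ∑ p ∈ Finset.range k,
            ((lam m ^ (k - 1 - p) - ∑ i ∈ Finset.range (k - 1 - p), lam m ^ i)
              * lam m ^ n / D m) * t p := by
        intro m
        rw [Finset.sum_div, Finset.sum_mul]
        exact Finset.sum_congr rfl fun p _ => by ring
      rw [Finset.sum_congr rfl fun m _ => hm m, Finset.sum_comm]
      exact Finset.sum_congr rfl fun p _ => (Finset.sum_mul _ _ _).symm
    have key : ∀ p ∈ Finset.range k,
        (∑ m, (lam m ^ (k - 1 - p) - ∑ i ∈ Finset.range (k - 1 - p), lam m ^ i)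
          * lam m ^ n / D m)
          = u ((k - 1 - p) + n) - ∑ i ∈ Finset.range (k - 1 - p), u (i + n) := by
      intro p _
      have hterm : ∀ m : Fin k,
          (lam m ^ (k - 1 - p) - ∑ i ∈ Finset.range (k - 1 - p), lam m ^ i)
            * lam m ^ n / D m
          = lam m ^ ((k - 1 - p) + n) / D m
            - ∑ i ∈ Finset.range (k - 1 - p), lam m ^ (i + n) / D m := by
        intro m
        simp only [sub_mul, sub_div, Finset.sum_mul, Finset.sum_div, pow_add]
      rw [Finset.sum_congr rfl fun m _ => hterm m, Finset.sum_sub_distrib, Finset.sum_comm]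
    rw [step1, Finset.sum_congr rfl (fun p hp => by
      rw [key p hp, hdelta p n (Finset.mem_range.mp hp) hn])]
    simp only [ite_mul, one_mul, zero_mul]
    rw [Finset.sum_ite_eq' (Finset.range k) n t, if_pos (Finset.mem_range.mpr hn)]
  have hHrec : ∀ n, H (n + k) = ∑ i ∈ Finset.range k, H (n + i) := by
    intro n
    simp only [hH]
    rw [Finset.sum_comm]
    refine Finset.sum_congr rfl fun m _ => ?_
    rw [← Finset.mul_sum]
    congr 1
    rw [pow_add, hroot m, Finset.mul_sum]
    exact Finset.sum_congr rfl fun i _ => (pow_add _ _ _).symm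
  intro n
  show G n = H n
  induction n using Nat.strong_induction_on with
  | _ n ih =>
    rcases lt_or_ge n k with h | h
    · rw [hGinit n h, hinit n h]
    · obtain ⟨m, rfl⟩ : ∃ m, n = m + k := ⟨n - k, by omega⟩
      rw [hGrec, hHrec]
      exact Finset.sum_congr rfl fun i hi =>
        ih (m + i) (by simp only [Finset.mem_range] at hi; omega)
end
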